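/- Let C be a coassociative counital coalgebra over a field k and p, t ∈ k. The linear map R(c⊗d) = p·ε(c)·Δ(d) + t·ε(d)·Δ(c) − p·c⊗d on C⊗C satisfies the braid equation R₁₂∘R₂₃∘R₁₂ = R₂₃∘R₁₂∘R₂₃. -/

import Mathlib

open TensorProduct LinearMap

noncomputable section Stmt2Aux

namespace Stmt2Aux

open Coalgebra

variable (k C : Type*) [Field k] [AddCommGroup C] [Module k C] [Coalgebra k C]

/-- triple tensor -/
abbrev T := C ⊗[k] (C ⊗[k] C)

def fm : C ⊗[k] C →ₗ[k] C :=
  (TensorProduct.lid k C).toLinearMap ∘ₗ (counit (R := k) (A := C)).rTensor C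

def gm : C ⊗[k] C →ₗ[k] C :=
  (TensorProduct.rid k C).toLinearMap ∘ₗ (counit (R := k) (A := C)).lTensor C

def xm : T k C →ₗ[k] C ⊗[k] C :=
  (TensorProduct.lid k (C ⊗[k] C)).toLinearMap ∘ₗ (counit (R := k) (A := C)).rTensor (C ⊗[k] C)

def ym : T k C →ₗ[k] C ⊗[k] C := (fm k C).lTensor C
def zm : T k C →ₗ[k] C ⊗[k] C := (gm k C).lTensor C

def d1 : C ⊗[k] C →ₗ[k] T k C :=
  (TensorProduct.assoc k C C C).toLinearMap ∘ₗ (comul (R := k) (A := C)).rTensor C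

def d2 : C ⊗[k] C →ₗ[k] T k C := (comul (R := k) (A := C)).lTensor C

def qm : T k C →ₗ[k] C := fm k C ∘ₗ xm k C
def mm : T k C →ₗ[k] C := gm k C ∘ₗ xm k C
def rm : T k C →ₗ[k] C := gm k C ∘ₗ ym k C

variable {k C}

@[simp] lemma fm_tmul (a b : C) : fm k C (a ⊗ₜ b) = counit (R := k) a • b := by
  simp [fm]

@[simp] lemma gm_tmul (a b : C) : gm k C (a ⊗ₜ b) = counit (R := k) b • a := by
  simp [gm]

@[simp] lemma xm_tmul (a : C) (w : C ⊗[k] C) : xm k C (a ⊗ₜ w) = counit (R := k) a • w := by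
  simp [xm]

@[simp] lemma ym_tmul (a : C) (w : C ⊗[k] C) : ym k C (a ⊗ₜ w) = a ⊗ₜ fm k C w := by
  simp [ym]

@[simp] lemma zm_tmul (a : C) (w : C ⊗[k] C) : zm k C (a ⊗ₜ w) = a ⊗ₜ gm k C w := by
  simp [zm]

@[simp] lemma d1_tmul (a b : C) :
    d1 k C (a ⊗ₜ b) = TensorProduct.assoc k C C C (comul (R := k) a ⊗ₜ b) := by
  simp [d1]

@[simp] lemma d2_tmul (a b : C) : d2 k C (a ⊗ₜ b) = a ⊗ₜ comul (R := k) b := by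
  simp [d2]

lemma extT {V : Type*} [AddCommGroup V] [Module k V] {F G : T k C →ₗ[k] V}
    (h : ∀ c d e : C, F (c ⊗ₜ (d ⊗ₜ e)) = G (c ⊗ₜ (d ⊗ₜ e))) : F = G :=
  TensorProduct.ext' fun c w => by
    induction w using TensorProduct.induction_on with
    | zero => simp [tmul_zero]
    | tmul d e => exact h c d e
    | add u v hu hv => rw [tmul_add, map_add, map_add, hu, hv]


-- counit laws in map form
lemma b7 : fm k C ∘ₗ comul (R := k) = LinearMap.id := by
  apply LinearMap.ext; intro a
  simp [fm]

lemma b8 : gm k C ∘ₗ comul (R := k) = LinearMap.id := by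
  apply LinearMap.ext; intro a
  simp [gm]

lemma hxa : xm k C ∘ₗ (TensorProduct.assoc k C C C).toLinearMap = (fm k C).rTensor C := by
  apply TensorProduct.ext_threefold; intro a b c
  simp [smul_tmul']

lemma hya : ym k C ∘ₗ (TensorProduct.assoc k C C C).toLinearMap = (gm k C).rTensor C := by
  apply TensorProduct.ext_threefold; intro a b c
  simp [smul_tmul', tmul_smul]

lemma hza : zm k C ∘ₗ (TensorProduct.assoc k C C C).toLinearMap =
    (TensorProduct.rid k (C ⊗[k] C)).toLinearMap ∘ₗ (counit (R := k) (A := C)).lTensor (C ⊗[k] C) := by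
  apply TensorProduct.ext_threefold; intro a b c
  simp [smul_tmul', tmul_smul]

lemma b1 : xm k C ∘ₗ d1 k C = LinearMap.id := by
  rw [d1, ← comp_assoc, hxa, ← rTensor_comp, b7, rTensor_id]

lemma b2 : ym k C ∘ₗ d1 k C = LinearMap.id := by
  rw [d1, ← comp_assoc, hya, ← rTensor_comp, b8, rTensor_id]

lemma b3 : ym k C ∘ₗ d2 k C = LinearMap.id := by
  rw [ym, d2, ← lTensor_comp, b7, lTensor_id]

lemma b4 : zm k C ∘ₗ d2 k C = LinearMap.id := by
  rw [zm, d2, ← lTensor_comp, b8, lTensor_id]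

lemma b5 : xm k C ∘ₗ d2 k C = comul (R := k) ∘ₗ fm k C := by
  apply TensorProduct.ext'; intro a b
  simp [map_smul]

lemma hrid : (TensorProduct.rid k (C ⊗[k] C)).toLinearMap ∘ₗ (comul (R := k) (A := C)).rTensor k =
    comul (R := k) ∘ₗ (TensorProduct.rid k C).toLinearMap := by
  apply TensorProduct.ext'; intro a s
  simp [map_smul]

lemma b6 : zm k C ∘ₗ d1 k C = comul (R := k) ∘ₗ gm k C := by
  rw [d1, ← comp_assoc, hza, gm, comp_assoc, lTensor_comp_rTensor, ← rTensor_comp_lTensor,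
    ← comp_assoc, hrid, comp_assoc]


-- coassociativity in this notation
lemma bco : d2 k C ∘ₗ comul (R := k) = d1 k C ∘ₗ comul (R := k) := by
  rw [d1, d2, comp_assoc]
  exact Coalgebra.coassoc.symm

-- D rules (plain)
lemma d_fx : fm k C ∘ₗ xm k C = qm k C := rfl
lemma d_gx : gm k C ∘ₗ xm k C = mm k C := rfl
lemma d_gy : gm k C ∘ₗ ym k C = rm k C := rfl
lemma d_fy : fm k C ∘ₗ ym k C = qm k C := by
  apply extT; intro c d e
  simp [qm, smul_smul, mul_comm]
lemma d_fz : fm k C ∘ₗ zm k C = mm k C := by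
  apply extT; intro c d e
  simp [mm, smul_smul, mul_comm]
lemma d_gz : gm k C ∘ₗ zm k C = rm k C := by
  apply extT; intro c d e
  simp [rm, smul_smul, mul_comm]

-- E rules (plain)
lemma e_q1 : qm k C ∘ₗ d1 k C = fm k C := by rw [qm, comp_assoc, b1, comp_id]
lemma e_q2 : qm k C ∘ₗ d2 k C = fm k C := by rw [qm, comp_assoc, b5, ← comp_assoc, b7, id_comp]
lemma e_m1 : mm k C ∘ₗ d1 k C = gm k C := by rw [mm, comp_assoc, b1, comp_id]
lemma e_m2 : mm k C ∘ₗ d2 k C = fm k C := by rw [mm, comp_assoc, b5, ← comp_assoc, b8, id_comp]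
lemma e_r1 : rm k C ∘ₗ d1 k C = gm k C := by rw [rm, comp_assoc, b2, comp_id]
lemma e_r2 : rm k C ∘ₗ d2 k C = gm k C := by rw [rm, comp_assoc, b3, comp_id]

-- contextual versions (W has source `T k C`)
section Ctx
variable (W : T k C →ₗ[k] C ⊗[k] C) (Wc : T k C →ₗ[k] C) (Wt : T k C →ₗ[k] T k C)

lemma b1c : xm k C ∘ₗ (d1 k C ∘ₗ W) = W := by rw [← comp_assoc, b1, id_comp]
lemma b2c : ym k C ∘ₗ (d1 k C ∘ₗ W) = W := by rw [← comp_assoc, b2, id_comp]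
lemma b3c : ym k C ∘ₗ (d2 k C ∘ₗ W) = W := by rw [← comp_assoc, b3, id_comp]
lemma b4c : zm k C ∘ₗ (d2 k C ∘ₗ W) = W := by rw [← comp_assoc, b4, id_comp]
lemma b5c : xm k C ∘ₗ (d2 k C ∘ₗ W) = comul (R := k) ∘ₗ (fm k C ∘ₗ W) := by
  rw [← comp_assoc, b5, comp_assoc]
lemma b6c : zm k C ∘ₗ (d1 k C ∘ₗ W) = comul (R := k) ∘ₗ (gm k C ∘ₗ W) := by
  rw [← comp_assoc, b6, comp_assoc]
lemma b7c : fm k C ∘ₗ (comul (R := k) ∘ₗ Wc) = Wc := by rw [← comp_assoc, b7, id_comp]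
lemma b8c : gm k C ∘ₗ (comul (R := k) ∘ₗ Wc) = Wc := by rw [← comp_assoc, b8, id_comp]
lemma bcoc : d2 k C ∘ₗ (comul (R := k) ∘ₗ Wc) = d1 k C ∘ₗ (comul (R := k) ∘ₗ Wc) := by
  rw [← comp_assoc, bco, comp_assoc]
lemma d_fxc : fm k C ∘ₗ (xm k C ∘ₗ Wt) = qm k C ∘ₗ Wt := by rw [← comp_assoc, d_fx]
lemma d_gxc : gm k C ∘ₗ (xm k C ∘ₗ Wt) = mm k C ∘ₗ Wt := by rw [← comp_assoc, d_gx]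
lemma d_gyc : gm k C ∘ₗ (ym k C ∘ₗ Wt) = rm k C ∘ₗ Wt := by rw [← comp_assoc, d_gy]
lemma d_fyc : fm k C ∘ₗ (ym k C ∘ₗ Wt) = qm k C ∘ₗ Wt := by rw [← comp_assoc, d_fy]
lemma d_fzc : fm k C ∘ₗ (zm k C ∘ₗ Wt) = mm k C ∘ₗ Wt := by rw [← comp_assoc, d_fz]
lemma d_gzc : gm k C ∘ₗ (zm k C ∘ₗ Wt) = rm k C ∘ₗ Wt := by rw [← comp_assoc, d_gz]
lemma e_q1c : qm k C ∘ₗ (d1 k C ∘ₗ W) = fm k C ∘ₗ W := by rw [← comp_assoc, e_q1]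
lemma e_q2c : qm k C ∘ₗ (d2 k C ∘ₗ W) = fm k C ∘ₗ W := by rw [← comp_assoc, e_q2]
lemma e_m1c : mm k C ∘ₗ (d1 k C ∘ₗ W) = gm k C ∘ₗ W := by rw [← comp_assoc, e_m1]
lemma e_m2c : mm k C ∘ₗ (d2 k C ∘ₗ W) = fm k C ∘ₗ W := by rw [← comp_assoc, e_m2]
lemma e_r1c : rm k C ∘ₗ (d1 k C ∘ₗ W) = gm k C ∘ₗ W := by rw [← comp_assoc, e_r1]
lemma e_r2c : rm k C ∘ₗ (d2 k C ∘ₗ W) = gm k C ∘ₗ W := by rw [← comp_assoc, e_r2]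

end Ctx


lemma hphi (e : C) : ((TensorProduct.mk k C C).flip e).lTensor C =
    (TensorProduct.assoc k C C C).toLinearMap ∘ₗ (TensorProduct.mk k (C ⊗[k] C) C).flip e := by
  apply TensorProduct.ext'; intro a b
  simp

end Stmt2Aux

end Stmt2Aux

open Stmt2Aux Coalgebra in
/-- For a coassociative counital `k`-coalgebra `C` and scalars `p, t`, the map
`R(c⊗d) = p·ε(c)·Δ(d) + t·ε(d)·Δ(c) − p·c⊗d` on `C ⊗ C` satisfies the braid equation
`R₁₂ ∘ R₂₃ ∘ R₁₂ = R₂₃ ∘ R₁₂ ∘ R₂₃`. -/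
theorem stmt2 (k C : Type*) [Field k] [AddCommGroup C] [Module k C] [Coalgebra k C]
    (p t : k)
    (R : C ⊗[k] C →ₗ[k] C ⊗[k] C)
    (hR : ∀ c d : C, R (c ⊗ₜ[k] d) =
      (p * Coalgebra.counit (R := k) c) • Coalgebra.comul (R := k) d
      + (t * Coalgebra.counit (R := k) d) • Coalgebra.comul (R := k) c
      - p • (c ⊗ₜ[k] d))
    (R12 : C ⊗[k] (C ⊗[k] C) →ₗ[k] C ⊗[k] (C ⊗[k] C))
    (hR12 : ∀ c d e : C, R12 (c ⊗ₜ[k] (d ⊗ₜ[k] e)) =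
      ((TensorProduct.mk k C C).flip e).lTensor C (R (c ⊗ₜ[k] d)))
    (R23 : C ⊗[k] (C ⊗[k] C) →ₗ[k] C ⊗[k] (C ⊗[k] C))
    (hR23 : R23 = R.lTensor C) :
    R12 ∘ₗ R23 ∘ₗ R12 = R23 ∘ₗ R12 ∘ₗ R23 := by
  have hRmap : R = p • (comul (R := k) ∘ₗ fm k C) + t • (comul (R := k) ∘ₗ gm k C)
      - p • LinearMap.id := by
    apply TensorProduct.ext'; intro c d
    rw [hR]
    simp [smul_smul]
  have hv : R23 = p • (d2 k C ∘ₗ ym k C) + t • (d2 k C ∘ₗ zm k C) - p • LinearMap.id := by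
    rw [hR23, hRmap]
    simp only [lTensor_add, lTensor_sub, lTensor_smul, lTensor_comp, lTensor_id]
    rfl
  have hu : R12 = p • (d1 k C ∘ₗ xm k C) + t • (d1 k C ∘ₗ ym k C) - p • LinearMap.id := by
    apply extT; intro c d e
    rw [hR12, hR, hphi]
    simp only [map_add, map_sub, map_smul, comp_apply, LinearEquiv.coe_coe,
      TensorProduct.mk_apply, LinearMap.flip_apply, LinearMap.add_apply, LinearMap.sub_apply, LinearMap.smul_apply,
      id_apply, d1_tmul, d2_tmul, xm_tmul, ym_tmul, zm_tmul, fm_tmul, gm_tmul,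
      map_smul, tmul_smul, smul_tmul']
    simp only [← smul_tmul', map_smul, TensorProduct.assoc_tmul]
    module
  rw [hu, hv]
  simp only [comp_add, add_comp, comp_sub, sub_comp, comp_smul, smul_comp,
    comp_id, id_comp, comp_assoc,
    b1c, b2c, b3c, b4c, b5c, b6c, b7c, b8c, bcoc,
    d_fxc, d_gxc, d_gyc, d_fyc, d_fzc, d_gzc,
    e_q1c, e_q2c, e_m1c, e_m2c, e_r1c, e_r2c,
    b1, b2, b3, b4, b5, b6, b7, b8, bco,
    d_fx, d_gx, d_gy, d_fy, d_fz, d_gz,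
    e_q1, e_q2, e_m1, e_m2, e_r1, e_r2]
  module
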